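/- With the same setup, if Σ_{m=0}^{L} a_m = 0, then σ(N) = −(1/N²) Σ_{l=1}^{L} Σ_{m=l}^{L} l·a_m·a_{m−l}, so σ(N) = O(1/N²); in particular the O(1/N) term vanishes. -/

import Mathlib

/-!
Mathlib's `measureT` is `dx / √(1 - x²)` on `(-1, 1]`, so the averages in `σ(N)` are integrals
against `measureT` divided by `π`, and the Chebyshev polynomials are orthogonal for it:
`⟨T_n T_k⟩ = δ_{nk} / 2` for `n, k ≥ 1`. Since `T_{p^m} ∘ T_{p^l} = T_{p^{m+l}}` and the `p^m` are
distinct, `⟨B⟩ = a_c` and the covariance of `B` and `B ∘ T_{p^l}` is `C(l) / 2`, where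
`C(l) = Σ_{m ≥ l} a_m a_{m-l}` vanishes for `l > L`. For `N ≥ L` this gives
`σ(N) = (C(0) + 2 Σ_{l ≥ 1} C(l)) / (2N) - Σ_l l C(l) / N²`, and the numerator of the `1/N` term is
`(Σ_m a_m)² = 0`.
-/

open Polynomial Polynomial.Chebyshev MeasureTheory Finset Asymptotics

namespace Polynomial.Chebyshev

open Real in
theorem setIntegral_Icc_mul_weight_eq_integral_measureT_div_pi (f : ℝ → ℝ) :
    ∫ x in Set.Icc (-1 : ℝ) 1, f x * (1 / (π * √(1 - x ^ 2))) = (∫ x, f x ∂measureT) / π := by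
  rw [integral_measureT, intervalIntegral.integral_of_le (by norm_num),
    integral_Icc_eq_integral_Ioc, ← integral_div]
  congr 1 with x
  rw [sqrt_inv]
  field_simp

theorem integral_const_measureT (c : ℝ) : ∫ _, c ∂measureT = Real.pi * c := by
  simpa using congrArg (c * ·) integral_eval_T_real_measureT_zero

theorem integral_eval_T_real_mul_eval_T_real_measureT_of_ne_zero {n k : ℕ} (hn : n ≠ 0)
    (hk : k ≠ 0) :
    ∫ x, (T ℝ n).eval x * (T ℝ k).eval x ∂measureT = if n = k then Real.pi / 2 else 0 := by
  split_ifs with h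
  · subst h; exact integral_T_real_mul_self_measureT_of_ne_zero hn
  · exact integral_eval_T_real_mul_eval_T_real_measureT_of_ne h

section ChebyshevSum

variable {ι κ : Type*} (s : Finset ι) (t : Finset κ)

theorem integral_sum_eval_T_real_measureT (a : ι → ℝ) {n : ι → ℕ} (hn : ∀ i ∈ s, n i ≠ 0) :
    ∫ x, ∑ i ∈ s, a i * (T ℝ (n i)).eval x ∂measureT = 0 := by
  rw [integral_finsetSum _ fun i _ => integrable_measureT (by fun_prop)]
  refine sum_eq_zero fun i hi => ?_
  rw [integral_const_mul, integral_eval_T_real_measureT_of_ne_zero (by exact_mod_cast hn i hi),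
    mul_zero]

theorem integral_sum_eval_T_real_mul_sum_eval_T_real_measureT (a : ι → ℝ) (b : κ → ℝ)
    {n : ι → ℕ} {k : κ → ℕ} (hn : ∀ i ∈ s, n i ≠ 0) (hk : ∀ j ∈ t, k j ≠ 0) :
    ∫ x, (∑ i ∈ s, a i * (T ℝ (n i)).eval x) * (∑ j ∈ t, b j * (T ℝ (k j)).eval x) ∂measureT
      = Real.pi / 2 * ∑ i ∈ s, ∑ j ∈ t, if n i = k j then a i * b j else 0 := by
  simp_rw [sum_mul_sum, mul_sum]
  rw [integral_finsetSum _ fun i _ => integrable_measureT (by fun_prop)]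
  refine sum_congr rfl fun i hi => ?_
  rw [integral_finsetSum _ fun j _ => integrable_measureT (by fun_prop)]
  refine sum_congr rfl fun j hj => ?_
  simp_rw [mul_mul_mul_comm (a i)]
  rw [integral_const_mul,
    integral_eval_T_real_mul_eval_T_real_measureT_of_ne_zero (hn i hi) (hk j hj)]
  split_ifs <;> ring

end ChebyshevSum

theorem integral_const_add_mul_const_add_measureT {f g : ℝ → ℝ} (hf : Continuous f)
    (hg : Continuous g) (hf0 : ∫ x, f x ∂measureT = 0) (hg0 : ∫ x, g x ∂measureT = 0) (c d : ℝ) :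
    ∫ x, (c + f x) * (d + g x) ∂measureT = Real.pi * (c * d) + ∫ x, f x * g x ∂measureT := by
  have hint : ∀ {h : ℝ → ℝ}, Continuous h → Integrable h measureT :=
    fun hh => integrable_measureT hh.continuousOn
  simp_rw [add_mul, mul_add]
  rw [integral_add (hint (by fun_prop)) (hint (by fun_prop)),
    integral_add (hint (by fun_prop)) (hint (by fun_prop)),
    integral_add (hint (by fun_prop)) (hint (by fun_prop)), integral_const_measureT,
    integral_const_mul, integral_mul_const, hf0, hg0]
  ring

end Polynomial.Chebyshev

def autocorr (a : ℕ → ℝ) (L l : ℕ) : ℝ := ∑ m ∈ Icc l L, a m * a (m - l)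

namespace autocorr

variable (a : ℕ → ℝ)

theorem eq_zero_of_lt {L l : ℕ} (h : L < l) : autocorr a L l = 0 := by
  simp [autocorr, Icc_eq_empty_of_lt h]

theorem succ_right {L l : ℕ} (h : l ≤ L + 1) :
    autocorr a (L + 1) l = autocorr a L l + a (L + 1) * a (L + 1 - l) :=
  sum_Icc_succ_top h _

theorem two_mul_sum_range (L : ℕ) :
    2 * ∑ l ∈ range (L + 1), autocorr a L l = (∑ m ∈ range (L + 1), a m) ^ 2 + autocorr a L 0 := by
  induction L with
  | zero => simp [autocorr, sq, two_mul]
  | succ L ih =>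
    have hlast : ∑ l ∈ range (L + 2), a (L + 1 - l) = ∑ m ∈ range (L + 2), a m := by
      simpa using sum_range_reflect a (L + 2)
    rw [sum_congr rfl fun l hl => succ_right a (by rw [mem_range] at hl; omega), sum_add_distrib,
      sum_range_succ (autocorr a L), eq_zero_of_lt a (Nat.lt_succ_self L), ← mul_sum, hlast,
      succ_right a (Nat.zero_le _), sum_range_succ a (L + 1)]
    linear_combination ih

theorem sq_sum_range (L : ℕ) :
    (∑ m ∈ range (L + 1), a m) ^ 2 = autocorr a L 0 + 2 * ∑ l ∈ Icc 1 L, autocorr a L l := by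
  have hsplit : ∑ l ∈ range (L + 1), autocorr a L l
      = autocorr a L 0 + ∑ l ∈ Icc 1 L, autocorr a L l := by
    rw [range_eq_Ico, sum_eq_sum_Ico_succ_bot (Nat.succ_pos L), zero_add,
      Nat.succ_eq_add_one, Ico_add_one_right_eq_Icc]
  linear_combination 2 * hsplit - two_mul_sum_range a L

theorem eq_sum_sum_ite (L l : ℕ) :
    ∑ m ∈ range (L + 1), ∑ m' ∈ range (L + 1), (if m = m' + l then a m * a m' else 0)
      = autocorr a L l := by
  have hinner : ∀ m ∈ range (L + 1),
      ∑ m' ∈ range (L + 1), (if m = m' + l then a m * a m' else 0)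
        = if l ≤ m then a m * a (m - l) else 0 := by
    intro m hm
    simp only [mem_range] at hm
    by_cases h : l ≤ m
    · rw [if_pos h, sum_eq_single_of_mem (m - l) (mem_range.2 (by omega))
        fun m' _ hm' => if_neg (by omega), if_pos (by omega)]
    · rw [if_neg h]
      exact sum_eq_zero fun m' _ => if_neg (by omega)
  rw [sum_congr rfl hinner, ← sum_filter, autocorr]
  congr 1
  ext m
  simp only [mem_filter, mem_range, mem_Icc]
  omega

end autocorr

/-- The variance of the mean of `N` consecutive terms of a stationary sequence with autocovariance
`c`; this is the paper's `σ(N)`. -/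
noncomputable def sampleMeanVariance (c : ℕ → ℝ) (N : ℕ) : ℝ :=
  1 / (N : ℝ) * c 0 + 2 / (N : ℝ) ^ 2 * ∑ l ∈ Icc 1 N, ((N : ℝ) - l) * c l

theorem sampleMeanVariance_eq_of_sum_eq_zero {c : ℕ → ℝ} {L N : ℕ}
    (hc : ∀ l, L < l → c l = 0) (hsum : c 0 + 2 * ∑ l ∈ Icc 1 L, c l = 0) (hLN : L ≤ N) :
    sampleMeanVariance c N = -(2 / (N : ℝ) ^ 2) * ∑ l ∈ Icc 1 L, (l : ℝ) * c l := by
  have htrunc : ∑ l ∈ Icc 1 N, ((N : ℝ) - l) * c l = ∑ l ∈ Icc 1 L, ((N : ℝ) - l) * c l := by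
    refine (sum_subset (Icc_subset_Icc_right hLN) fun l hlN hl => ?_).symm
    rw [hc l (by simp only [mem_Icc] at hlN hl; omega), mul_zero]
  rcases Nat.eq_zero_or_pos N with rfl | hN
  · simp [sampleMeanVariance]
  have hN' : (N : ℝ) ≠ 0 := by positivity
  rw [sampleMeanVariance, htrunc]
  simp only [sub_mul, sum_sub_distrib, ← mul_sum]
  field_simp
  linear_combination (N : ℝ) * hsum

noncomputable def lacunaryChebyshev (ac : ℝ) (a : ℕ → ℝ) (p L : ℕ) (x : ℝ) : ℝ :=
  ac + ∑ m ∈ range (L + 1), a m * (T ℝ (p ^ m : ℕ)).eval x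

namespace lacunaryChebyshev

variable (ac : ℝ) (a : ℕ → ℝ) {p : ℕ} (L : ℕ)

theorem comp_eval_T_pow (l : ℕ) (x : ℝ) :
    lacunaryChebyshev ac a p L ((T ℝ (p ^ l : ℕ)).eval x)
      = ac + ∑ m ∈ range (L + 1), a m * (T ℝ (p ^ (m + l) : ℕ)).eval x := by
  simp_rw [lacunaryChebyshev, ← eval_comp, ← T_mul, pow_add, Nat.cast_mul]

theorem integral_measureT (hp : p ≠ 0) :
    ∫ x, lacunaryChebyshev ac a p L x ∂measureT = Real.pi * ac := by
  unfold lacunaryChebyshev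
  rw [integral_add (integrable_measureT (by fun_prop)) (integrable_measureT (by fun_prop)),
    integral_const_measureT, integral_sum_eval_T_real_measureT _ _ fun m _ => pow_ne_zero m hp,
    add_zero]

theorem integral_mul_comp_eval_T_pow_measureT (hp : 2 ≤ p) (l : ℕ) :
    ∫ x, lacunaryChebyshev ac a p L x * lacunaryChebyshev ac a p L ((T ℝ (p ^ l : ℕ)).eval x)
        ∂measureT = Real.pi * (ac ^ 2 + autocorr a L l / 2) := by
  have hpow : ∀ m, p ^ m ≠ 0 := fun m => pow_ne_zero m (by omega)
  simp_rw [comp_eval_T_pow, lacunaryChebyshev]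
  rw [integral_const_add_mul_const_add_measureT (by fun_prop) (by fun_prop)
      (integral_sum_eval_T_real_measureT _ _ fun m _ => hpow m)
      (integral_sum_eval_T_real_measureT _ _ fun m _ => hpow (m + l)),
    integral_sum_eval_T_real_mul_sum_eval_T_real_measureT _ _ _ _ (fun m _ => hpow m)
      fun m _ => hpow (m + l)]
  simp_rw [(Nat.pow_right_injective hp).eq_iff, autocorr.eq_sum_sum_ite]
  ring

end lacunaryChebyshev

/-- superefficiency for `B = a_c + Σ_{m=0}^L a_m T_{p^m}`
when `Σ a_m = 0`: the `O(1/N)` term vanishes and `σ(N) = O(1/N²)`. -/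
theorem chebyshev_superefficiency
    (L : ℕ) (ac : ℝ) (a : ℕ → ℝ) (p : ℕ) (hp : 2 ≤ p)
    (B : ℝ → ℝ)
    (hB : ∀ x, B x = ac + ∑ m ∈ range (L + 1), a m * (T ℝ (p ^ m : ℕ)).eval x)
    (σ : ℕ → ℝ)
    (hσ : ∀ N : ℕ, σ N =
      (1 / (N : ℝ)) *
        ((∫ x in Set.Icc (-1 : ℝ) 1, B x ^ 2 * (1 / (Real.pi * Real.sqrt (1 - x ^ 2))))
          - (∫ x in Set.Icc (-1 : ℝ) 1, B x * (1 / (Real.pi * Real.sqrt (1 - x ^ 2)))) ^ 2)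
      + (2 / (N : ℝ) ^ 2) * ∑ l ∈ Icc 1 N, ((N : ℝ) - (l : ℝ)) *
          ((∫ x in Set.Icc (-1 : ℝ) 1,
              B x * B ((T ℝ (p ^ l : ℕ)).eval x) * (1 / (Real.pi * Real.sqrt (1 - x ^ 2))))
            - (∫ x in Set.Icc (-1 : ℝ) 1, B x * (1 / (Real.pi * Real.sqrt (1 - x ^ 2)))) ^ 2))
    (hsum : ∑ m ∈ range (L + 1), a m = 0) :
    (∀ N : ℕ, L ≤ N → 1 ≤ N →
      σ N = -(1 / (N : ℝ) ^ 2) *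
          ∑ l ∈ Icc 1 L, ∑ m ∈ Icc l L, (l : ℝ) * a m * a (m - l))
    ∧ (fun N : ℕ => σ N) =O[Filter.atTop] (fun N : ℕ => 1 / (N : ℝ) ^ 2) := by
  obtain rfl : B = lacunaryChebyshev ac a p L := funext hB
  have hmean : ∫ x in Set.Icc (-1 : ℝ) 1,
      lacunaryChebyshev ac a p L x * (1 / (Real.pi * Real.sqrt (1 - x ^ 2))) = ac := by
    rw [setIntegral_Icc_mul_weight_eq_integral_measureT_div_pi,
      lacunaryChebyshev.integral_measureT _ _ _ (by omega)]
    field_simp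
  have hcov : ∀ l : ℕ, (∫ x in Set.Icc (-1 : ℝ) 1, lacunaryChebyshev ac a p L x
        * lacunaryChebyshev ac a p L ((T ℝ (p ^ l : ℕ)).eval x)
        * (1 / (Real.pi * Real.sqrt (1 - x ^ 2)))) - ac ^ 2 = autocorr a L l / 2 := by
    intro l
    rw [setIntegral_Icc_mul_weight_eq_integral_measureT_div_pi,
      lacunaryChebyshev.integral_mul_comp_eval_T_pow_measureT _ _ _ hp]
    field_simp
    ring
  have hvar := hcov 0
  simp only [pow_zero, Nat.cast_one, T_one, eval_X, ← sq] at hvar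
  have hσ' : ∀ N, σ N = sampleMeanVariance (fun l => autocorr a L l / 2) N := by
    intro N
    rw [hσ N, hmean, hvar]
    simp_rw [hcov]
    rfl
  have hauto : autocorr a L 0 / 2 + 2 * ∑ l ∈ Icc 1 L, autocorr a L l / 2 = 0 := by
    have h := autocorr.sq_sum_range a L
    rw [hsum, zero_pow two_ne_zero] at h
    rw [← sum_div]
    linear_combination -h / 2
  have formula : ∀ N, L ≤ N →
      σ N = -(1 / (N : ℝ) ^ 2) * ∑ l ∈ Icc 1 L, ∑ m ∈ Icc l L, (l : ℝ) * a m * a (m - l) := by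
    intro N hLN
    rw [hσ', sampleMeanVariance_eq_of_sum_eq_zero
      (fun l hl => by rw [autocorr.eq_zero_of_lt a hl, zero_div]) hauto hLN]
    simp only [autocorr, sum_div, mul_sum]
    exact sum_congr rfl fun l _ => sum_congr rfl fun m _ => by ring
  refine ⟨fun N hLN _ => formula N hLN, ?_⟩
  refine (isBigO_const_mul_self
    (-∑ l ∈ Icc 1 L, ∑ m ∈ Icc l L, (l : ℝ) * a m * a (m - l)) _ _).congr' ?_ .rfl
  filter_upwards [Filter.eventually_ge_atTop L] with N hLN
  rw [formula N hLN]
  ring
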